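/- For every σ > 0 and ω > 0, the L^{2σ} norm of the solitary-wave profile tends to zero at the left endpoint of the admissible speed interval: ∫_ℝ |φ_{ω,c}(x)|^{2σ} dx → 0 as c → −2√ω from the right (with c ranging over (−2√ω, 2√ω)). -/

import Mathlib

open MeasureTheory

/-- The amplitude `Φ_{ω,c}` of the solitary-wave profile for the generalized
derivative nonlinear Schrödinger equation. -/
noncomputable def PhiProf (σ ω c : ℝ) (x : ℝ) : ℝ :=
  ((σ + 1) * (4 * ω - c ^ 2) /
      (2 * Real.sqrt ω * Real.cosh (σ * Real.sqrt (4 * ω - c ^ 2) * x) - c)) ^ (1 / (2 * σ))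

/-- The solitary-wave profile `φ_{ω,c}`. -/
noncomputable def phiProf (σ ω c : ℝ) (x : ℝ) : ℂ :=
  (PhiProf σ ω c x : ℂ) *
    Complex.exp (Complex.I *
      (((c / 2) * x : ℝ) - ((1 / (2 * σ + 2)) * ∫ y in Set.Iic x, PhiProf σ ω c y ^ (2 * σ) : ℝ)))

/-!
For `c ≤ 0` the denominator of `|φ_{ω,c}|^{2σ}` is at least `2√ω cosh (k x) ≥ √ω e^{|k x|}`,
where `k = σ √(4ω - c²)`. Integrating `e^{-|k x|}` gives `2 / k`, so
`∫ |φ_{ω,c}|^{2σ} ≤ 2 (σ + 1) √(4ω - c²) / (σ √ω)`, which tends to `0` as `c → -2√ω`.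
-/

open Real Filter Topology Set

lemma integral_exp_neg_abs : ∫ x : ℝ, exp (-|x|) = 2 := by
  rw [integral_comp_abs (f := fun x => exp (-x)), integral_exp_neg_Ioi_zero, mul_one]

lemma integrable_exp_neg_abs : Integrable fun x : ℝ => exp (-|x|) :=
  Integrable.of_integral_ne_zero (by rw [integral_exp_neg_abs]; exact two_ne_zero)

lemma inv_cosh_le_two_mul_exp_neg_abs (x : ℝ) : (cosh x)⁻¹ ≤ 2 * exp (-|x|) := by
  have hcosh : exp |x| ≤ 2 * cosh x := by
    rw [← cosh_abs, cosh_eq]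
    linarith [exp_pos (-|x|)]
  rw [exp_neg, ← div_eq_mul_inv, inv_le_comm₀ (cosh_pos x) (by positivity), inv_div]
  linarith

lemma integral_inv_mul_cosh_add_le {a b k : ℝ} (ha : 0 < a) (hb : 0 ≤ b) (hk : 0 < k) :
    ∫ x : ℝ, (a * cosh (k * x) + b)⁻¹ ≤ 4 / (a * k) := by
  have hpos : ∀ x, 0 < a * cosh (k * x) + b := fun x => by
    have := cosh_pos (k * x)
    positivity
  have hle : ∀ x, (a * cosh (k * x) + b)⁻¹ ≤ 2 * a⁻¹ * exp (-|k * x|) := fun x =>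
    calc (a * cosh (k * x) + b)⁻¹
        ≤ (a * cosh (k * x))⁻¹ := inv_anti₀ (mul_pos ha (cosh_pos _)) (by linarith)
      _ = a⁻¹ * (cosh (k * x))⁻¹ := mul_inv a _
      _ ≤ 2 * a⁻¹ * exp (-|k * x|) := by
          rw [mul_comm 2, mul_assoc]
          gcongr
          exact inv_cosh_le_two_mul_exp_neg_abs _
  have hint : Integrable fun x : ℝ => 2 * a⁻¹ * exp (-|k * x|) :=
    ((integrable_comp_mul_left_iff (fun u : ℝ => exp (-|u|)) hk.ne').2
      integrable_exp_neg_abs).const_mul _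
  calc ∫ x : ℝ, (a * cosh (k * x) + b)⁻¹
      ≤ ∫ x : ℝ, 2 * a⁻¹ * exp (-|k * x|) :=
        integral_mono_of_nonneg (.of_forall fun x => (inv_pos.2 (hpos x)).le) hint
          (.of_forall hle)
    _ = 4 / (a * k) := by
        rw [integral_const_mul, Measure.integral_comp_mul_left (fun u : ℝ => exp (-|u|)),
          integral_exp_neg_abs, smul_eq_mul, abs_of_pos (inv_pos.2 hk)]
        field_simp
        ring

lemma norm_phiProf (σ ω c x : ℝ) : ‖phiProf σ ω c x‖ = |PhiProf σ ω c x| := by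
  rw [phiProf, norm_mul, ← Complex.ofReal_sub, Complex.norm_exp_I_mul_ofReal, mul_one,
    Complex.norm_real, Real.norm_eq_abs]

lemma sub_sq_pos_of_mem_Ioo {ω c : ℝ} (hc : c ∈ Ioo (-2 * √ω) (2 * √ω)) : 0 < 4 * ω - c ^ 2 := by
  have hω : 0 ≤ ω := (sqrt_pos.1 (by linarith [hc.1, hc.2])).le
  have h : 4 * ω - c ^ 2 = (2 * √ω - c) * (2 * √ω + c) := by
    ring_nf
    rw [sq_sqrt hω]
    ring
  rw [h]
  exact mul_pos (by linarith [hc.2]) (by linarith [hc.1])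

lemma norm_phiProf_rpow {σ ω c : ℝ} (hσ : 0 < σ) (hc : c ∈ Ioo (-2 * √ω) (2 * √ω)) (x : ℝ) :
    ‖phiProf σ ω c x‖ ^ (2 * σ) =
      (σ + 1) * (4 * ω - c ^ 2) * (2 * √ω * cosh (σ * √(4 * ω - c ^ 2) * x) + -c)⁻¹ := by
  have hden : 0 < 2 * √ω * cosh (σ * √(4 * ω - c ^ 2) * x) - c := by
    nlinarith [one_le_cosh (σ * √(4 * ω - c ^ 2) * x), sqrt_nonneg ω, hc.2]
  have hbase : 0 ≤ (σ + 1) * (4 * ω - c ^ 2) /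
      (2 * √ω * cosh (σ * √(4 * ω - c ^ 2) * x) - c) :=
    div_nonneg (mul_nonneg (by linarith) (sub_sq_pos_of_mem_Ioo hc).le) hden.le
  rw [norm_phiProf, PhiProf, abs_of_nonneg (rpow_nonneg hbase _), ← rpow_mul hbase,
    one_div_mul_cancel (by positivity), rpow_one, ← sub_eq_add_neg, div_eq_mul_inv]

lemma integral_norm_phiProf_rpow_le {σ ω c : ℝ} (hσ : 0 < σ) (hc : -2 * √ω < c) (hc0 : c ≤ 0) :
    ∫ x : ℝ, ‖phiProf σ ω c x‖ ^ (2 * σ) ≤ 2 * (σ + 1) / (√ω * σ) * √(4 * ω - c ^ 2) := by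
  have hω : 0 < √ω := by linarith
  have hmem : c ∈ Ioo (-2 * √ω) (2 * √ω) := ⟨hc, by linarith⟩
  have hd := sub_sq_pos_of_mem_Ioo hmem
  simp_rw [norm_phiProf_rpow hσ hmem]
  rw [integral_const_mul]
  calc (σ + 1) * (4 * ω - c ^ 2) *
        ∫ x : ℝ, (2 * √ω * cosh (σ * √(4 * ω - c ^ 2) * x) + -c)⁻¹
      ≤ (σ + 1) * (4 * ω - c ^ 2) * (4 / (2 * √ω * (σ * √(4 * ω - c ^ 2)))) := by
        refine mul_le_mul_of_nonneg_left ?_ (mul_pos (by linarith) hd).le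
        exact integral_inv_mul_cosh_add_le (by positivity) (by linarith) (by positivity)
    _ = 2 * (σ + 1) / (√ω * σ) * √(4 * ω - c ^ 2) := by
        nth_rewrite 1 [← sq_sqrt hd.le]
        field_simp
        ring

/-- For every `σ > 0` and `ω > 0`, the `L^{2σ}` norm of the solitary-wave profile tends to `0`
as `c → −2√ω` from within the admissible speed interval `(−2√ω, 2√ω)`. -/
theorem solitary_wave_L2sigma_tendsto_zero (σ ω : ℝ) (hσ : 0 < σ) (hω : 0 < ω) :
    Filter.Tendsto (fun c : ℝ => ∫ x : ℝ, ‖phiProf σ ω c x‖ ^ (2 * σ))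
      (nhdsWithin (-2 * Real.sqrt ω) (Set.Ioo (-2 * Real.sqrt ω) (2 * Real.sqrt ω)))
      (nhds 0) := by
  have hleft : -2 * √ω < 0 := by linarith [sqrt_pos.2 hω]
  have hbound : Tendsto (fun c => 2 * (σ + 1) / (√ω * σ) * √(4 * ω - c ^ 2))
      (𝓝 (-2 * √ω)) (𝓝 0) := by
    have hcont : Continuous fun c : ℝ => 2 * (σ + 1) / (√ω * σ) * √(4 * ω - c ^ 2) := by
      fun_prop
    refine hcont.tendsto' _ _ ?_
    rw [mul_pow, sq_sqrt hω.le]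
    norm_num
  refine squeeze_zero' (.of_forall fun c => integral_nonneg fun x => by positivity) ?_
    (hbound.mono_left nhdsWithin_le_nhds)
  filter_upwards [self_mem_nhdsWithin, nhdsWithin_le_nhds (Iio_mem_nhds hleft)] with c hc hc0
  exact integral_norm_phiProf_rpow_le hσ hc.1 hc0.le
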